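/- arXiv:1505.04252 — 3 statements merged into one kernel-verified Lean document; each statement's English description precedes it below -/
import Mathlib

section
/- Let f₁ be convex on a convex set X₁ ⊆ ℝⁿ¹ with subgradient g₁ at x₁^{k+1} ∈ X₁ satisfying the variational inequality ⟨x₁ - x₁^{k+1}, g₁ - A₁ᵀλᵏ + γA₁ᵀ(A₁x₁^{k+1} + A₂x₂ᵏ + x₃ᵏ - b)⟩ ≥ 0 for all x₁ ∈ X₁. Then L_γ(x₁ᵏ,x₂ᵏ,x₃ᵏ;λᵏ) - L_γ(x₁^{k+1},x₂ᵏ,x₃ᵏ;λᵏ) ≥ (γ/2)‖A₁x₁ᵏ - A₁x₁^{k+1}‖², where L_γ(x₁,x₂,x₃;λ) = f₁(x₁)+f₂(x₂)+(1/2)‖x₃‖² - ⟨λ, A₁x₁+A₂x₂+x₃-b⟩ + (γ/2)‖A₁x₁+A₂x₂+x₃-b‖². -/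
open RealInnerProductSpace

theorem augmented_lagrangian_decrease_x1
    (n₁ n₂ p : ℕ)
    (A₁ : EuclideanSpace ℝ (Fin n₁) →L[ℝ] EuclideanSpace ℝ (Fin p))
    (A₂ : EuclideanSpace ℝ (Fin n₂) →L[ℝ] EuclideanSpace ℝ (Fin p))
    (b : EuclideanSpace ℝ (Fin p)) (γ : ℝ) (hγ : 0 < γ)
    (X₁ : Set (EuclideanSpace ℝ (Fin n₁)))
    (f₁ : EuclideanSpace ℝ (Fin n₁) → ℝ) (f₂ : EuclideanSpace ℝ (Fin n₂) → ℝ)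
    (x₁k x₁kp1 g₁ : EuclideanSpace ℝ (Fin n₁))
    (x₂k : EuclideanSpace ℝ (Fin n₂)) (x₃k lamk : EuclideanSpace ℝ (Fin p))
    (hx₁k : x₁k ∈ X₁) (hx₁kp1 : x₁kp1 ∈ X₁)
    (hsubgrad : ∀ x₁, f₁ x₁ - f₁ x₁kp1 ≥ ⟪g₁, x₁ - x₁kp1⟫)
    (hVI : ∀ x₁ ∈ X₁,
      ⟪x₁ - x₁kp1, g₁ - (ContinuousLinearMap.adjoint A₁) lamk +
        γ • (ContinuousLinearMap.adjoint A₁) (A₁ x₁kp1 + A₂ x₂k + x₃k - b)⟫ ≥ 0) :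
    let L : EuclideanSpace ℝ (Fin n₁) → EuclideanSpace ℝ (Fin n₂) →
        EuclideanSpace ℝ (Fin p) → EuclideanSpace ℝ (Fin p) → ℝ :=
      fun x₁ x₂ x₃ lam => f₁ x₁ + f₂ x₂ + (1 / 2) * ‖x₃‖ ^ 2 -
        ⟪lam, A₁ x₁ + A₂ x₂ + x₃ - b⟫ + (γ / 2) * ‖A₁ x₁ + A₂ x₂ + x₃ - b‖ ^ 2
    L x₁k x₂k x₃k lamk - L x₁kp1 x₂k x₃k lamk ≥ (γ / 2) * ‖A₁ x₁k - A₁ x₁kp1‖ ^ 2 := by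
  intro L
  set d := x₁k - x₁kp1 with hd
  set u := A₁ x₁k + A₂ x₂k + x₃k - b with hu
  set v := A₁ x₁kp1 + A₂ x₂k + x₃k - b with hv
  have huv : u - v = A₁ d := by
    simp only [hu, hv, hd, map_sub]
    abel
  have hVI' := hVI x₁k hx₁k
  rw [inner_add_right, inner_sub_right, real_inner_smul_right,
    ContinuousLinearMap.adjoint_inner_right, ContinuousLinearMap.adjoint_inner_right] at hVI'
  have hsub := hsubgrad x₁k
  rw [real_inner_comm] at hsub
  have h2 : ⟪v, A₁ d⟫ = ⟪u, v⟫ - ‖v‖ ^ 2 := by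
    rw [← huv, inner_sub_right, real_inner_self_eq_norm_sq, real_inner_comm]
  have h1 : ‖A₁ d‖ ^ 2 = ‖u‖ ^ 2 - 2 * ⟪u, v⟫ + ‖v‖ ^ 2 := by
    rw [← huv]; exact norm_sub_sq_real u v
  have hnorm : ‖u‖ ^ 2 - ‖v‖ ^ 2 - 2 * ⟪v, A₁ d⟫ = ‖A₁ d‖ ^ 2 := by
    rw [h1, h2]; ring
  have hl : ⟪lamk, u⟫ - ⟪lamk, v⟫ = ⟪lamk, A₁ d⟫ := by
    rw [← inner_sub_right, huv]
  have key : L x₁k x₂k x₃k lamk - L x₁kp1 x₂k x₃k lamk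
      = f₁ x₁k - f₁ x₁kp1 - ⟪lamk, A₁ d⟫ + (γ / 2) * (‖u‖ ^ 2 - ‖v‖ ^ 2) := by
    simp only [L, ← hu, ← hv]
    linarith [hl]
  have hAd : A₁ x₁k - A₁ x₁kp1 = A₁ d := by rw [hd, map_sub]
  rw [hAd, key]
  have hc1 : ⟪lamk, A₁ d⟫ = ⟪A₁ d, lamk⟫ := real_inner_comm _ _
  have hc2 : ⟪A₁ d, v⟫ = ⟪v, A₁ d⟫ := real_inner_comm _ _
  rw [hc1]
  rw [← hd] at hVI' hsub
  nlinarith [hVI', hsub, hnorm, hc2, hγ.le]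
end

section
/- Given a monotone operator g₂ with ⟨x₂^{k+1} - x₂ᵏ, g₂(x₂^{k+1}) - g₂(x₂ᵏ)⟩ ≥ 0, reals γ > 0, ε > 0, and the two variational inequalities ⟨x₂ᵏ - x₂^{k+1}, g₂(x₂^{k+1}) - A₂ᵀλ^{k+1} + γA₂ᵀ(x₃ᵏ - x₃^{k+1})⟩ ≥ 0 and ⟨x₂^{k+1} - x₂ᵏ, g₂(x₂ᵏ) - A₂ᵀλᵏ + γA₂ᵀ(x₃^{k-1} - x₃ᵏ)⟩ ≥ 0, one obtains ⟨A₂x₂^{k+1} - A₂x₂ᵏ, λ^{k+1} - λᵏ⟩ ≥ -(γ/ε)‖A₂x₂^{k+1} - A₂x₂ᵏ‖² - (γε/2)‖x₃ᵏ - x₃^{k-1}‖² - (γε/2)‖x₃^{k+1} - x₃ᵏ‖². -/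
open RealInnerProductSpace

set_option maxHeartbeats 1000000 in
theorem x2_cross_term_bound (n₂ p : ℕ) (γ ε : ℝ) (hγ : 0 < γ) (hε : 0 < ε)
    (A₂ : EuclideanSpace ℝ (Fin n₂) →L[ℝ] EuclideanSpace ℝ (Fin p))
    (x₂k x₂kp1 g₂k g₂kp1 : EuclideanSpace ℝ (Fin n₂))
    (x₃km1 x₃k x₃kp1 lamk lamkp1 : EuclideanSpace ℝ (Fin p))
    (hmono : ⟪x₂kp1 - x₂k, g₂kp1 - g₂k⟫ ≥ 0)
    (hVI1 : ⟪x₂k - x₂kp1, g₂kp1 - (ContinuousLinearMap.adjoint A₂) lamkp1 +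
        γ • (ContinuousLinearMap.adjoint A₂) (x₃k - x₃kp1)⟫ ≥ 0)
    (hVI2 : ⟪x₂kp1 - x₂k, g₂k - (ContinuousLinearMap.adjoint A₂) lamk +
        γ • (ContinuousLinearMap.adjoint A₂) (x₃km1 - x₃k)⟫ ≥ 0) :
    ⟪A₂ x₂kp1 - A₂ x₂k, lamkp1 - lamk⟫ ≥
      -(γ / ε) * ‖A₂ x₂kp1 - A₂ x₂k‖ ^ 2 - (γ * ε / 2) * ‖x₃k - x₃km1‖ ^ 2 -
        (γ * ε / 2) * ‖x₃kp1 - x₃k‖ ^ 2 := by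
  set u := A₂ x₂kp1 - A₂ x₂k with hu
  have key : ⟪u, lamkp1 - lamk⟫ ≥
      γ * ⟪u, x₃k - x₃km1⟫ - γ * ⟪u, x₃kp1 - x₃k⟫ := by
    simp only [inner_add_right, inner_sub_right, inner_sub_left, inner_smul_right,
      ContinuousLinearMap.adjoint_inner_right, map_sub, hu] at hVI1 hVI2 hmono ⊢
    nlinarith [hVI1, hVI2, hmono]
  have cs1 : |⟪u, x₃k - x₃km1⟫| ≤ ‖u‖ * ‖x₃k - x₃km1‖ := abs_real_inner_le_norm _ _
  have cs2 : |⟪u, x₃kp1 - x₃k⟫| ≤ ‖u‖ * ‖x₃kp1 - x₃k‖ := abs_real_inner_le_norm _ _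
  have h1 := abs_le.mp cs1
  have h2 := abs_le.mp cs2
  have b1 : γ * ⟪u, x₃k - x₃km1⟫ ≥
      -(γ / (2 * ε)) * ‖u‖ ^ 2 - (γ * ε / 2) * ‖x₃k - x₃km1‖ ^ 2 := by
    have hs := sq_nonneg (‖u‖ - ε * ‖x₃k - x₃km1‖)
    have hh := h1.1
    rw [ge_iff_le, ← sub_nonneg]
    have expand : γ * ⟪u, x₃k - x₃km1⟫ - (-(γ / (2 * ε)) * ‖u‖ ^ 2 - (γ * ε / 2) * ‖x₃k - x₃km1‖ ^ 2)
        = (2 * ε * (γ * ⟪u, x₃k - x₃km1⟫) + γ * ‖u‖ ^ 2 + γ * ε ^ 2 * ‖x₃k - x₃km1‖ ^ 2) / (2 * ε) := by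
      field_simp; ring
    rw [expand]
    apply div_nonneg _ (by positivity)
    nlinarith [mul_nonneg hγ.le hs,
      mul_le_mul_of_nonneg_left hh (show (0:ℝ) ≤ 2 * ε * γ by positivity)]
  have b2 : -(γ * ⟪u, x₃kp1 - x₃k⟫) ≥
      -(γ / (2 * ε)) * ‖u‖ ^ 2 - (γ * ε / 2) * ‖x₃kp1 - x₃k‖ ^ 2 := by
    have hs := sq_nonneg (‖u‖ - ε * ‖x₃kp1 - x₃k‖)
    have hh := h2.2
    rw [ge_iff_le, ← sub_nonneg]
    have expand : -(γ * ⟪u, x₃kp1 - x₃k⟫) - (-(γ / (2 * ε)) * ‖u‖ ^ 2 - (γ * ε / 2) * ‖x₃kp1 - x₃k‖ ^ 2)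
        = (-(2 * ε * (γ * ⟪u, x₃kp1 - x₃k⟫)) + γ * ‖u‖ ^ 2 + γ * ε ^ 2 * ‖x₃kp1 - x₃k‖ ^ 2) / (2 * ε) := by
      field_simp; ring
    rw [expand]
    apply div_nonneg _ (by positivity)
    nlinarith [mul_nonneg hγ.le hs,
      mul_le_mul_of_nonneg_left hh (show (0:ℝ) ≤ 2 * ε * γ by positivity)]
  have hεne : ε ≠ 0 := ne_of_gt hε
  have : -(γ / ε) * ‖u‖ ^ 2 = -(γ / (2 * ε)) * ‖u‖ ^ 2 + -(γ / (2 * ε)) * ‖u‖ ^ 2 := by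
    field_simp; ring
  linarith [key, b1, b2]
end

section
/- Let σ, L be positive reals with σ ≤ L and let η₂ > 2. If 0 < γ < min{4σ/η₂, σ(η₂-2)/(4η₂) + √(σ²(η₂-2)²/(16η₂²) + σ²(η₂-2)/(4η₂))}, then there exists ε > 2η₂/(η₂-2) such that σ - η₂γ/4 ≥ 0, γ/2 - γ/η₂ - γ/ε > 0, and σ + σ²/(2γ) - γε > 0. -/
set_option maxHeartbeats 1000000 in
theorem exists_epsilon (σ L γ η₂ : ℝ) (hσ : 0 < σ) (hL : 0 < L) (hσL : σ ≤ L)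
    (hη₂ : 2 < η₂) (hγpos : 0 < γ)
    (hγ : γ < min (4 * σ / η₂)
      (σ * (η₂ - 2) / (4 * η₂) +
        Real.sqrt (σ ^ 2 * (η₂ - 2) ^ 2 / (16 * η₂ ^ 2) + σ ^ 2 * (η₂ - 2) / (4 * η₂)))) :
    ∃ ε : ℝ, 2 * η₂ / (η₂ - 2) < ε ∧ 0 ≤ σ - η₂ * γ / 4 ∧
      0 < γ / 2 - γ / η₂ - γ / ε ∧ 0 < σ + σ ^ 2 / (2 * γ) - γ * ε := by
  have hη0 : (0:ℝ) < η₂ := by linarith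
  have hη2 : (0:ℝ) < η₂ - 2 := by linarith
  have h1 : γ < 4 * σ / η₂ := lt_of_lt_of_le hγ (min_le_left _ _)
  rw [lt_div_iff₀ hη0] at h1
  have h2 : γ < σ * (η₂ - 2) / (4 * η₂) +
      Real.sqrt (σ ^ 2 * (η₂ - 2) ^ 2 / (16 * η₂ ^ 2) + σ ^ 2 * (η₂ - 2) / (4 * η₂)) :=
    lt_of_lt_of_le hγ (min_le_right _ _)
  have hDnn : 0 ≤ σ ^ 2 * (η₂ - 2) ^ 2 / (16 * η₂ ^ 2) + σ ^ 2 * (η₂ - 2) / (4 * η₂) := by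
    positivity
  have hs0 : 0 ≤ Real.sqrt (σ ^ 2 * (η₂ - 2) ^ 2 / (16 * η₂ ^ 2) + σ ^ 2 * (η₂ - 2) / (4 * η₂)) :=
    Real.sqrt_nonneg _
  have hs2 : Real.sqrt (σ ^ 2 * (η₂ - 2) ^ 2 / (16 * η₂ ^ 2) + σ ^ 2 * (η₂ - 2) / (4 * η₂)) ^ 2
      = σ ^ 2 * (η₂ - 2) ^ 2 / (16 * η₂ ^ 2) + σ ^ 2 * (η₂ - 2) / (4 * η₂) :=
    Real.sq_sqrt hDnn
  have hceq : 4 * η₂ * (σ * (η₂ - 2) / (4 * η₂)) = σ * (η₂ - 2) := by field_simp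
  have hDeq : 16 * η₂ ^ 2 * (σ ^ 2 * (η₂ - 2) ^ 2 / (16 * η₂ ^ 2) + σ ^ 2 * (η₂ - 2) / (4 * η₂))
      = σ ^ 2 * (η₂ - 2) ^ 2 + 4 * η₂ * σ ^ 2 * (η₂ - 2) := by field_simp; ring
  have key : 2 * η₂ * γ ^ 2 < (η₂ - 2) * σ * γ + (η₂ - 2) * σ ^ 2 / 2 := by
    rcases le_or_gt γ (σ * (η₂ - 2) / (4 * η₂)) with h | h
    · have h4 : 4 * η₂ * γ ≤ σ * (η₂ - 2) := by
        calc 4 * η₂ * γ ≤ 4 * η₂ * (σ * (η₂ - 2) / (4 * η₂)) := by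
              exact mul_le_mul_of_nonneg_left h (by positivity)
          _ = σ * (η₂ - 2) := hceq
      nlinarith [mul_pos hσ hγpos, mul_pos (mul_pos hη2 hσ) hσ]
    · have h3 : γ - σ * (η₂ - 2) / (4 * η₂) <
          Real.sqrt (σ ^ 2 * (η₂ - 2) ^ 2 / (16 * η₂ ^ 2) + σ ^ 2 * (η₂ - 2) / (4 * η₂)) := by
        linarith
      have h4 : (γ - σ * (η₂ - 2) / (4 * η₂)) ^ 2 <
          σ ^ 2 * (η₂ - 2) ^ 2 / (16 * η₂ ^ 2) + σ ^ 2 * (η₂ - 2) / (4 * η₂) := by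
        nlinarith [sq_nonneg (Real.sqrt (σ ^ 2 * (η₂ - 2) ^ 2 / (16 * η₂ ^ 2) +
          σ ^ 2 * (η₂ - 2) / (4 * η₂)) - (γ - σ * (η₂ - 2) / (4 * η₂)))]
      have h5 : 16 * η₂ ^ 2 * (γ - σ * (η₂ - 2) / (4 * η₂)) ^ 2 <
          16 * η₂ ^ 2 * (σ ^ 2 * (η₂ - 2) ^ 2 / (16 * η₂ ^ 2) + σ ^ 2 * (η₂ - 2) / (4 * η₂)) := by
        have h16 : (0:ℝ) < 16 * η₂ ^ 2 := by positivity
        exact (mul_lt_mul_iff_right₀ h16).2 h4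
      have h6 : 16 * η₂ ^ 2 * γ ^ 2 - 8 * η₂ * (σ * (η₂ - 2) * γ) + (σ * (η₂ - 2)) ^ 2 <
          σ ^ 2 * (η₂ - 2) ^ 2 + 4 * η₂ * σ ^ 2 * (η₂ - 2) := by
        calc 16 * η₂ ^ 2 * γ ^ 2 - 8 * η₂ * (σ * (η₂ - 2) * γ) + (σ * (η₂ - 2)) ^ 2
            = 16 * η₂ ^ 2 * (γ - σ * (η₂ - 2) / (4 * η₂)) ^ 2 := by
              field_simp
              ring
          _ < _ := h5
          _ = _ := hDeq
      nlinarith [h6, mul_pos hη0 hη0]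
  have hA0 : 0 < 2 * η₂ / (η₂ - 2) := by positivity
  have hAB : 2 * η₂ / (η₂ - 2) < (σ + σ ^ 2 / (2 * γ)) / γ := by
    rw [div_lt_div_iff₀ hη2 hγpos, ← mul_lt_mul_iff_left₀ hγpos]
    calc 2 * η₂ * γ * γ = 2 * η₂ * γ ^ 2 := by ring
      _ < (η₂ - 2) * σ * γ + (η₂ - 2) * σ ^ 2 / 2 := key
      _ = (σ + σ ^ 2 / (2 * γ)) * (η₂ - 2) * γ := by field_simp
  refine ⟨(2 * η₂ / (η₂ - 2) + (σ + σ ^ 2 / (2 * γ)) / γ) / 2, by linarith, by linarith, ?_, ?_⟩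
  · have hinv : γ / ((2 * η₂ / (η₂ - 2) + (σ + σ ^ 2 / (2 * γ)) / γ) / 2)
        < γ / (2 * η₂ / (η₂ - 2)) :=
      div_lt_div_of_pos_left hγpos hA0 (by linarith)
    have h5 : γ / (2 * η₂ / (η₂ - 2)) = γ / 2 - γ / η₂ := by
      field_simp
    linarith
  · have hlt : (2 * η₂ / (η₂ - 2) + (σ + σ ^ 2 / (2 * γ)) / γ) / 2
        < (σ + σ ^ 2 / (2 * γ)) / γ := by linarith
    have hm : γ * ((2 * η₂ / (η₂ - 2) + (σ + σ ^ 2 / (2 * γ)) / γ) / 2)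
        < γ * ((σ + σ ^ 2 / (2 * γ)) / γ) :=
      mul_lt_mul_of_pos_left hlt hγpos
    have hBe : γ * ((σ + σ ^ 2 / (2 * γ)) / γ) = σ + σ ^ 2 / (2 * γ) := by
      rw [mul_comm, div_mul_cancel₀ _ hγpos.ne']
    linarith
end
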